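/- Let b : ℝⁿ → ℝⁿ and σ : ℝⁿ → ℝ^{n×m} be continuously differentiable, set a(x) = σ(x)σ(x)ᵀ and define the Hamiltonian H(x,p) = ⟨b(x), p⟩ + ½⟨p, a(x)p⟩. Suppose φ, θ, μ : [0,T] → ℝⁿ are differentiable and satisfy, for all t ∈ [0,T]: (i) φ̇(t) = b(φ(t)) + a(φ(t))θ(t) (the first Hamilton equation with momentum θ); (ii) −μ̇(t) = ∇ₓH(φ(t), μ(t)) + ½ ∇ₓ(‖σ(x)ᵀ(θ(t) − μ(t))‖²)|_{x=φ(t)} (the adjoint equation including the error term); and (iii) a(φ(t))(θ(t) − μ(t)) = 0 (vanishing of the gradient of the cost in θ). Then for all t: σ(φ(t))ᵀθ(t) = σ(φ(t))ᵀμ(t), the error-term gradient ∇ₓ(‖σ(x)ᵀ(θ(t) − μ(t))‖²)|_{x=φ(t)} is zero, and the pair (φ, μ) solves Hamilton's equations: φ̇ = ∇ₚH(φ, μ) = b(φ) + a(φ)μ and μ̇ = −∇ₓH(φ, μ). -/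

import Mathlib

open Matrix Set
open scoped RealInnerProductSpace

/-- Identify a plain vector in `ℝⁿ` with a point of Euclidean space. -/
noncomputable def toE {n : ℕ} (v : Fin n → ℝ) : EuclideanSpace ℝ (Fin n) :=
  (WithLp.equiv 2 (Fin n → ℝ)).symm v

/-- Identify a point of Euclidean space with a plain vector in `ℝⁿ`. -/
noncomputable def ofE {n : ℕ} (v : EuclideanSpace ℝ (Fin n)) : Fin n → ℝ :=
  WithLp.equiv 2 (Fin n → ℝ) v

/-!
Since `a = σσᵀ`, the condition `a(φ)(θ - μ) = 0` forces `σ(φ)ᵀ(θ - μ) = 0` (pair it with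
`θ - μ`). So the nonnegative error term `x ↦ ‖σ(x)ᵀ(θ - μ)‖²` attains its minimum `0` at `x = φ`,
and its gradient vanishes there. Moreover `a(φ)θ = a(φ)μ`, and `∇ₚH(x, p) = b(x) + a(x)p` because
`a(x)` is symmetric, so equations (i) and (ii) become Hamilton's equations for `(φ, μ)`.
-/

section InnerProductSpace

variable {F : Type*} [NormedAddCommGroup F] [InnerProductSpace ℝ F] [CompleteSpace F]

theorem gradient_eq_zero_of_nonneg_of_eq_zero {f : F → ℝ} {x : F} (hf : ∀ y, 0 ≤ f y)
    (hx : f x = 0) : gradient f x = 0 := by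
  have hmin : IsLocalMin f x := Filter.Eventually.of_forall fun y => hx ▸ hf y
  rw [gradient, hmin.fderiv_eq_zero, map_zero]

theorem LinearMap.IsSymmetric.hasGradientAt_inner_add_half_inner_self {T : F →L[ℝ] F}
    (hT : (T : F →ₗ[ℝ] F).IsSymmetric) (c x : F) :
    HasGradientAt (fun p => ⟪c, p⟫ + (1/2 : ℝ) * ⟪p, T p⟫) (c + T x) x := by
  have hf : (fun p => ⟪c, p⟫ + (1/2 : ℝ) * ⟪p, T p⟫) =
      fun p => innerSL ℝ c p + (1/2 : ℝ) * T.reApplyInnerSelf p := by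
    funext p
    simp [ContinuousLinearMap.reApplyInnerSelf_apply, real_inner_comm]
  rw [hasGradientAt_iff_hasFDerivAt, hf]
  refine ((innerSL ℝ c).hasFDerivAt.add
    ((hT.hasStrictFDerivAt_reApplyInnerSelf x).hasFDerivAt.const_mul (1/2 : ℝ))).congr_fderiv ?_
  ext y
  simp

end InnerProductSpace

theorem ofE_sub {n : ℕ} (v w : EuclideanSpace ℝ (Fin n)) : ofE (v - w) = ofE v - ofE w := rfl

theorem toE_mulVec_ofE {n : ℕ} (A : Matrix (Fin n) (Fin n) ℝ) (v : EuclideanSpace ℝ (Fin n)) :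
    toE (A *ᵥ ofE v) = Matrix.toEuclideanCLM (𝕜 := ℝ) A v := rfl

theorem isSymmetric_toEuclideanCLM_mul_transpose_self {ι κ : Type*} [Fintype ι] [DecidableEq ι]
    [Fintype κ] (S : Matrix ι κ ℝ) :
    (Matrix.toEuclideanCLM (𝕜 := ℝ) (S * Sᵀ) :
      EuclideanSpace ℝ ι →ₗ[ℝ] EuclideanSpace ℝ ι).IsSymmetric := by
  rw [Matrix.coe_toEuclideanCLM_eq_toEuclideanLin, Matrix.isSymmetric_toEuclideanLin_iff,
    ← conjTranspose_eq_transpose_of_trivial]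
  exact isHermitian_mul_conjTranspose_self S

theorem adjoint_state_method_converges_to_hamilton_general {n m : ℕ} (T : ℝ)
    (b : EuclideanSpace ℝ (Fin n) → EuclideanSpace ℝ (Fin n))
    (σ : EuclideanSpace ℝ (Fin n) → Fin n → Fin m → ℝ)
    (a : EuclideanSpace ℝ (Fin n) → Matrix (Fin n) (Fin n) ℝ)
    (ha : ∀ x, a x = Matrix.of (σ x) * (Matrix.of (σ x))ᵀ)
    (H : EuclideanSpace ℝ (Fin n) → EuclideanSpace ℝ (Fin n) → ℝ)
    (hH : ∀ x p, H x p = ⟪b x, p⟫ + (1/2 : ℝ) * ⟪p, toE (a x *ᵥ ofE p)⟫)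
    (φ θ μ : ℝ → EuclideanSpace ℝ (Fin n))
    -- (i) first Hamilton equation with momentum θ
    (hi : ∀ t ∈ Icc 0 T,
      HasDerivWithinAt φ (b (φ t) + toE (a (φ t) *ᵥ ofE (θ t))) (Icc 0 T) t)
    -- (ii) adjoint equation including the error term
    (hii : ∀ t ∈ Icc 0 T,
      HasDerivWithinAt μ
        (-(gradient (fun x => H x (μ t)) (φ t))
          - (1/2 : ℝ) • gradient
              (fun x => ‖toE ((Matrix.of (σ x))ᵀ *ᵥ ofE (θ t - μ t))‖ ^ 2) (φ t))
        (Icc 0 T) t)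
    -- (iii) vanishing of the gradient of the cost in θ
    (hiii : ∀ t ∈ Icc 0 T, a (φ t) *ᵥ ofE (θ t - μ t) = 0) :
    ∀ t ∈ Icc 0 T,
      -- the noise realised by θ coincides with the noise realised by μ
      (Matrix.of (σ (φ t)))ᵀ *ᵥ ofE (θ t) = (Matrix.of (σ (φ t)))ᵀ *ᵥ ofE (μ t) ∧
      -- the error-term gradient is zero
      gradient (fun x => ‖toE ((Matrix.of (σ x))ᵀ *ᵥ ofE (θ t - μ t))‖ ^ 2) (φ t) = 0 ∧
      -- first Hamilton equation for the pair (φ, μ): φ̇ = ∇ₚH(φ,μ) = b(φ) + a(φ)μ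
      gradient (fun p => H (φ t) p) (μ t) = b (φ t) + toE (a (φ t) *ᵥ ofE (μ t)) ∧
      HasDerivWithinAt φ (b (φ t) + toE (a (φ t) *ᵥ ofE (μ t))) (Icc 0 T) t ∧
      -- second Hamilton equation: μ̇ = −∇ₓH(φ,μ)
      HasDerivWithinAt μ (-(gradient (fun x => H x (μ t)) (φ t))) (Icc 0 T) t := by
  intro t ht
  set S := Matrix.of (σ (φ t))
  have hnoise : Sᵀ *ᵥ ofE (θ t - μ t) = 0 := by
    have h := hiii t ht
    rwa [ha, ← conjTranspose_eq_transpose_of_trivial, self_mul_conjTranspose_mulVec_eq_zero,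
      conjTranspose_eq_transpose_of_trivial] at h
  have hmomentum : a (φ t) *ᵥ ofE (θ t) = a (φ t) *ᵥ ofE (μ t) := by
    rw [← sub_eq_zero, ← mulVec_sub, ← ofE_sub, hiii t ht]
  have herror : gradient
      (fun x => ‖toE ((Matrix.of (σ x))ᵀ *ᵥ ofE (θ t - μ t))‖ ^ 2) (φ t) = 0 :=
    gradient_eq_zero_of_nonneg_of_eq_zero (fun _ => sq_nonneg _) (by simp [S, hnoise, toE])
  refine ⟨?_, herror, ?_, hmomentum ▸ hi t ht, by simpa [herror] using hii t ht⟩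
  · rwa [← sub_eq_zero, ← mulVec_sub, ← ofE_sub]
  · have hHp : (fun p => H (φ t) p) =
        fun p => ⟪b (φ t), p⟫ + (1/2 : ℝ) * ⟪p, Matrix.toEuclideanCLM (𝕜 := ℝ) (a (φ t)) p⟫ :=
      funext fun p => hH _ p
    rw [hHp, toE_mulVec_ofE, ha]
    have hsym := isSymmetric_toEuclideanCLM_mul_transpose_self S
    exact (hsym.hasGradientAt_inner_add_half_inner_self _ _).gradient

/-- Adjoint state method at convergence: if `φ, θ, μ : [0,T] → ℝⁿ` are differentiable and
satisfy (i) the first Hamilton equation `φ̇ = b(φ) + a(φ)θ` with momentum `θ`, (ii) the adjoint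
equation `−μ̇ = ∇ₓH(φ,μ) + ½∇ₓ‖σ(x)ᵀ(θ−μ)‖²|_{x=φ}` including the error term, and (iii) the
vanishing gradient condition `a(φ)(θ − μ) = 0`, where `a = σσᵀ` and
`H(x,p) = ⟨b(x),p⟩ + ½⟨p, a(x)p⟩`, then the noise realised by `θ` equals that realised by `μ`,
the error-term gradient vanishes, and `(φ, μ)` solves Hamilton's equations. -/
theorem adjoint_state_method_converges_to_hamilton {n m : ℕ} (T : ℝ) (hT : 0 < T)
    (b : EuclideanSpace ℝ (Fin n) → EuclideanSpace ℝ (Fin n))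
    (σ : EuclideanSpace ℝ (Fin n) → Fin n → Fin m → ℝ)
    (hb : ContDiff ℝ 1 b) (hσ : ContDiff ℝ 1 σ)
    (a : EuclideanSpace ℝ (Fin n) → Matrix (Fin n) (Fin n) ℝ)
    (ha : ∀ x, a x = Matrix.of (σ x) * (Matrix.of (σ x))ᵀ)
    (H : EuclideanSpace ℝ (Fin n) → EuclideanSpace ℝ (Fin n) → ℝ)
    (hH : ∀ x p, H x p = ⟪b x, p⟫ + (1/2 : ℝ) * ⟪p, toE (a x *ᵥ ofE p)⟫)
    (φ θ μ : ℝ → EuclideanSpace ℝ (Fin n))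
    (hθdiff : ∀ t ∈ Icc 0 T, DifferentiableWithinAt ℝ θ (Icc 0 T) t)
    -- (i) first Hamilton equation with momentum θ
    (hi : ∀ t ∈ Icc 0 T,
      HasDerivWithinAt φ (b (φ t) + toE (a (φ t) *ᵥ ofE (θ t))) (Icc 0 T) t)
    -- (ii) adjoint equation including the error term
    (hii : ∀ t ∈ Icc 0 T,
      HasDerivWithinAt μ
        (-(gradient (fun x => H x (μ t)) (φ t))
          - (1/2 : ℝ) • gradient
              (fun x => ‖toE ((Matrix.of (σ x))ᵀ *ᵥ ofE (θ t - μ t))‖ ^ 2) (φ t))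
        (Icc 0 T) t)
    -- (iii) vanishing of the gradient of the cost in θ
    (hiii : ∀ t ∈ Icc 0 T, a (φ t) *ᵥ ofE (θ t - μ t) = 0) :
    ∀ t ∈ Icc 0 T,
      -- the noise realised by θ coincides with the noise realised by μ
      (Matrix.of (σ (φ t)))ᵀ *ᵥ ofE (θ t) = (Matrix.of (σ (φ t)))ᵀ *ᵥ ofE (μ t) ∧
      -- the error-term gradient is zero
      gradient (fun x => ‖toE ((Matrix.of (σ x))ᵀ *ᵥ ofE (θ t - μ t))‖ ^ 2) (φ t) = 0 ∧
      -- first Hamilton equation for the pair (φ, μ): φ̇ = ∇ₚH(φ,μ) = b(φ) + a(φ)μ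
      gradient (fun p => H (φ t) p) (μ t) = b (φ t) + toE (a (φ t) *ᵥ ofE (μ t)) ∧
      HasDerivWithinAt φ (b (φ t) + toE (a (φ t) *ᵥ ofE (μ t))) (Icc 0 T) t ∧
      -- second Hamilton equation: μ̇ = −∇ₓH(φ,μ)
      HasDerivWithinAt μ (-(gradient (fun x => H x (μ t)) (φ t))) (Icc 0 T) t :=
  adjoint_state_method_converges_to_hamilton_general T b σ a ha H hH φ θ μ hi hii hiii
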